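/- Let h = (X_α)_{α∈A} be a point of H = Π_{α∈A} Mat(n,K) such that D_k(X_α) ≠ 0 for every arrow α ∈ A and every 1 ≤ k ≤ n. Then there exists g = (g_v)_{v∈V} ∈ U_Q = Π_{v∈V} UT(n) such that for every arrow α one has g_{t(α)} X_α g_{s(α)}⁻¹ ∈ S_α, i.e. g.h lies in the section S = Π_{α∈A} S_α. -/

import Mathlib

open Matrix

/-- Entry of an `n × n` matrix in 1-based indexing; `0` outside the range `[1,n]²`. -/
def ent {R : Type*} [Zero R] {n : ℕ} (X : Matrix (Fin n) (Fin n) R) (a b : ℕ) : R :=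
  if h : 1 ≤ a ∧ a ≤ n ∧ 1 ≤ b ∧ b ≤ n then X ⟨a - 1, by omega⟩ ⟨b - 1, by omega⟩ else 0

/-- `Dmin k X`: the left lower corner minor of order `n - k + 1`;
rows `k,…,n`, columns `1,…,n-k+1` (1-based). -/
noncomputable def Dmin {R : Type*} [CommRing R] {n : ℕ} (k : ℕ)
    (X : Matrix (Fin n) (Fin n) R) : R :=
  (Matrix.of fun r c : Fin (n + 1 - k) => ent X (k + r.val) (1 + c.val)).det

/-- `Mmin i j X`: minor of order `n - i + 1` with rows `i,…,n` and
columns `1,…,n-i` together with column `j` (1-based). -/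
noncomputable def Mmin {R : Type*} [CommRing R] {n : ℕ} (i j : ℕ)
    (X : Matrix (Fin n) (Fin n) R) : R :=
  (Matrix.of fun r c : Fin (n + 1 - i) =>
    ent X (i + r.val) (if c.val < n - i then 1 + c.val else j)).det

/-- `Nmin j k Y`: minor of order `n - k + 1` with rows `{j} ∪ {k+1,…,n}` and
columns `1,…,n-k+1` (1-based). -/
noncomputable def Nmin {R : Type*} [CommRing R] {n : ℕ} (j k : ℕ)
    (Y : Matrix (Fin n) (Fin n) R) : R :=
  (Matrix.of fun r c : Fin (n + 1 - k) =>
    ent Y (if r.val = 0 then j else k + r.val) (1 + c.val)).det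

/-- `Pmin i k X Y = Σ_{j=i'}^{k} M_{ij}(X) N_{jk}(Y)`, where `i' = n - i + 1`. -/
noncomputable def Pmin {R : Type*} [CommRing R] {n : ℕ} (i k : ℕ)
    (X Y : Matrix (Fin n) (Fin n) R) : R :=
  ∑ j ∈ Finset.Icc (n + 1 - i) k, Mmin i j X * Nmin j k Y

/-- `Rminus i k X Y`: determinant of the `k × k` matrix whose first `n - i + 1` rows are
rows `i,…,n` of `X` restricted to columns `1,…,k`, and whose remaining rows are the last
`k - (n - i + 1)` rows of `Y` restricted to columns `1,…,k`. -/
noncomputable def Rminus {R : Type*} [CommRing R] {n : ℕ} (i k : ℕ)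
    (X Y : Matrix (Fin n) (Fin n) R) : R :=
  (Matrix.of fun r c : Fin k =>
    if r.val < n + 1 - i then ent X (i + r.val) (1 + c.val)
    else ent Y (n - k + 1 + r.val) (1 + c.val)).det

/-- `Rplus i k Z X`: determinant of the `(n-i+1) × (n-i+1)` matrix whose first
`(n-i+1) - k` columns are columns `1,…,(n-i+1)-k` of `Z` restricted to rows `i,…,n`,
and whose last `k` columns are columns `1,…,k` of `X` restricted to rows `i,…,n`. -/
noncomputable def Rplus {R : Type*} [CommRing R] {n : ℕ} (i k : ℕ)
    (Z X : Matrix (Fin n) (Fin n) R) : R :=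
  (Matrix.of fun r c : Fin (n + 1 - i) =>
    if c.val < n + 1 - i - k then ent Z (i + r.val) (1 + c.val)
    else ent X (i + r.val) (c.val - (n + 1 - i - k) + 1)).det

/-- Square minor of order `m` with rows `r₀, r₀+1, …` and columns `c₀, c₀+1, …` (1-based). -/
noncomputable def RectMinor {R : Type*} [CommRing R] {n : ℕ} (r₀ c₀ m : ℕ)
    (X : Matrix (Fin n) (Fin n) R) : R :=
  (Matrix.of fun r c : Fin m => ent X (r₀ + r.val) (c₀ + c.val)).det

/-- `u` is upper triangular with ones on the diagonal. -/
def IsUT {R : Type*} [CommRing R] {n : ℕ} (u : Matrix (Fin n) (Fin n) R) : Prop :=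
  (∀ i, u i i = 1) ∧ ∀ i j : Fin n, (j : ℕ) < (i : ℕ) → u i j = 0

/-- Anti-diagonal matrix: entries off the anti-diagonal vanish (0-based: `a + b = n - 1`). -/
def AntiDiag {R : Type*} [Zero R] {n : ℕ} (X : Matrix (Fin n) (Fin n) R) : Prop :=
  ∀ a b : Fin n, (a : ℕ) + (b : ℕ) ≠ n - 1 → X a b = 0

/-- Lower anti-triangular: entries above the anti-diagonal vanish. -/
def LowerAnti {R : Type*} [Zero R] {n : ℕ} (X : Matrix (Fin n) (Fin n) R) : Prop :=
  ∀ a b : Fin n, (a : ℕ) + (b : ℕ) < n - 1 → X a b = 0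

/-- Upper anti-triangular: entries below the anti-diagonal vanish. -/
def UpperAnti {R : Type*} [Zero R] {n : ℕ} (X : Matrix (Fin n) (Fin n) R) : Prop :=
  ∀ a b : Fin n, n - 1 < (a : ℕ) + (b : ℕ) → X a b = 0

/-- Membership in the piece `S_α` of the section, for an arrow `α` of the quiver with
source/target maps `s, t` and a choice map `ψ` assigning to each vertex an incident arrow:
if `α` is a loop, `S_α = S⁻(n)` when `α = ψ(q)` and `S_α = Mat(n)` otherwise; if `α` is not
a loop, `S_α = S⁻(n)` if `α = ψ(t α) ≠ ψ(s α)`, `S_α = S⁺(n)` if `α = ψ(s α) ≠ ψ(t α)`,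
`S_α = Λ(n)` if `α = ψ(s α) = ψ(t α)`, and `S_α = Mat(n)` if `α ∉ Im ψ`. -/
def SMem {K : Type*} [Field K] {n : ℕ} {V A : Type*} (s t : A → V) (ψ : V → A) (α : A)
    (M : Matrix (Fin n) (Fin n) K) : Prop :=
  (s α = t α → (α = ψ (s α) → LowerAnti M)) ∧
  (s α ≠ t α →
    ((α = ψ (t α) ∧ α ≠ ψ (s α)) → LowerAnti M) ∧
    ((α = ψ (s α) ∧ α ≠ ψ (t α)) → UpperAnti M) ∧
    ((α = ψ (s α) ∧ α = ψ (t α)) → AntiDiag M))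


/-! With `J` the anti-diagonal permutation matrix, the condition `D_k(X) ≠ 0` for all `k` says that
the leading principal minors of `J X` are nonzero, so `X` can be brought to anti-diagonal form
`u X w` with `u, w` upper unitriangular. Concretely, suppose the last `e` rows and first `e` columns
are already anti-diagonal. The entry at row `n - e`, column `e + 1` is the only possibly nonzero
entry in the first row of the minor `D_{n-e}`, which unitriangular operations preserve, so it is a
nonzero pivot; adding multiples of its row to the rows above and of its column to the columns on
its right clears both, extending the hook to `e + 1`.

Given `u_α X_α w_α = Λ_α` anti-diagonal, take `g_v = u_{ψ v}` if `ψ v` ends at `v` and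
`g_v = w_{ψ v}⁻¹` otherwise. Then `g_{t α} X_α g_{s α}⁻¹` is `Λ_α` times an upper unitriangular
matrix (in `S⁻`) when `g_{t α} = u_α`, an upper unitriangular matrix times `Λ_α` (in `S⁺`) when
`g_{s α} = w_α⁻¹`, and `Λ_α` itself when both hold. -/

section MatrixProducts

variable {R : Type*} [NonUnitalNonAssocSemiring R] {n : ℕ}

theorem Matrix.IsUpperTriangular.mul_apply_self {m : Type*} [Fintype m] [LinearOrder m]
    {A B : Matrix m m R} (hA : A.IsUpperTriangular) (hB : B.IsUpperTriangular) (i : m) :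
    (A * B) i i = A i i * B i i := by
  rw [mul_apply, Finset.sum_eq_single i _ (by simp)]
  intro c _ hc
  rcases lt_or_gt_of_ne hc with h | h
  · rw [hA h, zero_mul]
  · rw [hB h, mul_zero]

theorem Matrix.submatrix_mul_of_forall_notMem_range {l m o l' m' o' : Type*} [Fintype m]
    [Fintype m'] (A : Matrix l m R) (B : Matrix m o R) {e₁ : l' → l} {e : m' → m}
    {e₂ : o' → o} (he : Function.Injective e)
    (h : ∀ i j k, k ∉ Set.range e → A (e₁ i) k * B k (e₂ j) = 0) :
    (A * B).submatrix e₁ e₂ = A.submatrix e₁ e * B.submatrix e e₂ := by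
  ext i j
  exact (Fintype.sum_of_injective e he _ _ (h i j) fun _ => rfl).symm

theorem AntiDiag.lowerAnti_mul_right {Λ v : Matrix (Fin n) (Fin n) R} (hΛ : AntiDiag Λ)
    (hv : v.IsUpperTriangular) : LowerAnti (Λ * v) := by
  intro a b hab
  rw [mul_apply]
  refine Finset.sum_eq_zero fun c _ => ?_
  rcases eq_or_ne ((a : ℕ) + c) (n - 1) with h | h
  · rw [hv (show b < c by rw [Fin.lt_def]; omega), mul_zero]
  · rw [hΛ a c h, zero_mul]

theorem AntiDiag.upperAnti_mul_left {Λ v : Matrix (Fin n) (Fin n) R} (hΛ : AntiDiag Λ)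
    (hv : v.IsUpperTriangular) : UpperAnti (v * Λ) := by
  intro a b hab
  rw [mul_apply]
  refine Finset.sum_eq_zero fun c _ => ?_
  rcases eq_or_ne ((c : ℕ) + b) (n - 1) with h | h
  · rw [hv (show c < a by rw [Fin.lt_def]; omega), zero_mul]
  · rw [hΛ c b h, mul_zero]

end MatrixProducts

section Unitriangular

variable {R : Type*} [CommRing R] {n : ℕ}

namespace IsUT

variable {u v : Matrix (Fin n) (Fin n) R}

theorem isUpperTriangular (hu : IsUT u) : u.IsUpperTriangular := fun i j h => hu.2 i j h

theorem one : IsUT (1 : Matrix (Fin n) (Fin n) R) :=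
  ⟨one_apply_eq, fun _ _ h => one_apply_ne (Fin.ne_of_gt h)⟩

theorem one_add {N : Matrix (Fin n) (Fin n) R} (hN : ∀ i j, j ≤ i → N i j = 0) :
    IsUT (1 + N) :=
  ⟨fun i => by simp [hN i i le_rfl],
    fun i j h => by simp [one_apply_ne (Fin.ne_of_gt h), hN i j h.le]⟩

theorem mul (hu : IsUT u) (hv : IsUT v) : IsUT (u * v) :=
  ⟨fun i => by rw [hu.isUpperTriangular.mul_apply_self hv.isUpperTriangular, hu.1, hv.1, one_mul],
    fun _ _ h => hu.isUpperTriangular.mul hv.isUpperTriangular h⟩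

theorem det (hu : IsUT u) : u.det = 1 := by
  rw [det_of_isUpperTriangular hu.isUpperTriangular]
  exact Finset.prod_eq_one fun i _ => hu.1 i

theorem isUnit_det (hu : IsUT u) : IsUnit u.det := hu.det ▸ isUnit_one

theorem inv (hu : IsUT u) : IsUT u⁻¹ := by
  have := u.invertibleOfIsUnitDet hu.isUnit_det
  have hinv : u⁻¹.IsUpperTriangular := blockTriangular_inv_of_blockTriangular hu.isUpperTriangular
  refine ⟨fun i => ?_, fun _ _ h => hinv h⟩
  have hii := congr_fun₂ (mul_nonsing_inv u hu.isUnit_det) i i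
  rwa [hu.isUpperTriangular.mul_apply_self hinv, hu.1, one_mul, one_apply_eq] at hii

theorem inv_inv (hu : IsUT u) : u⁻¹⁻¹ = u := nonsing_inv_nonsing_inv u hu.isUnit_det

theorem submatrix {m : ℕ} (hu : IsUT u) {e : Fin m → Fin n} (he : StrictMono e) :
    IsUT (u.submatrix e e) :=
  ⟨fun i => hu.1 (e i), fun _ _ h => hu.2 _ _ (he h)⟩

end IsUT

end Unitriangular

section Dmin

variable {R : Type*} [CommRing R] {n : ℕ}

theorem Dmin_eq_det_submatrix {k : ℕ} (hk : 1 ≤ k) (X : Matrix (Fin n) (Fin n) R) :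
    Dmin k X = (X.submatrix (fun r : Fin (n + 1 - k) => (⟨k - 1 + r, by omega⟩ : Fin n))
      (fun c : Fin (n + 1 - k) => (⟨c, by omega⟩ : Fin n))).det := by
  unfold Dmin
  congr 1
  ext r c
  simp only [ent, of_apply, submatrix_apply]
  rw [dif_pos (by omega)]
  congr 2 <;> omega

theorem Dmin_mul_mul_of_isUT {u w : Matrix (Fin n) (Fin n) R} (hu : IsUT u) (hw : IsUT w)
    {k : ℕ} (hk : 1 ≤ k) (X : Matrix (Fin n) (Fin n) R) :
    Dmin k (u * X * w) = Dmin k X := by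
  have hrows : StrictMono fun r : Fin (n + 1 - k) => (⟨k - 1 + r, by omega⟩ : Fin n) :=
    fun a b h => by simpa using h
  have hcols : StrictMono fun c : Fin (n + 1 - k) => (⟨c, by omega⟩ : Fin n) :=
    fun a b h => by simpa using h
  rw [Dmin_eq_det_submatrix hk, Dmin_eq_det_submatrix hk,
    submatrix_mul_of_forall_notMem_range _ _ hcols.injective, det_mul,
    (hw.submatrix hcols).det, mul_one,
    submatrix_mul_of_forall_notMem_range _ _ hrows.injective, det_mul,
    (hu.submatrix hrows).det, one_mul]
  · intro r c i hi
    have hi' : (i : ℕ) < k - 1 + r := by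
      by_contra! h
      exact hi ⟨⟨i - (k - 1), by omega⟩, Fin.ext (by simp; omega)⟩
    rw [hu.2 _ _ hi', zero_mul]
  · intro r c i hi
    have hi' : n + 1 - k ≤ (i : ℕ) := by
      by_contra! h
      exact hi ⟨⟨i, h⟩, rfl⟩
    rw [hw.2 _ _ (by simp; omega), mul_zero]

end Dmin

section Elimination

variable {K : Type*} [Field K] {n : ℕ}

theorem exists_isUT_clearing_col_above {X : Matrix (Fin n) (Fin n) K} {p q : Fin n}
    (hpq : X p q ≠ 0) :
    ∃ u : Matrix (Fin n) (Fin n) K, IsUT u ∧ (∀ i j, (p ≤ i ∨ X p j = 0) → (u * X) i j = X i j) ∧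
      ∀ i < p, (u * X) i q = 0 := by
  classical
  let v : Fin n → K := fun i => if i < p then -X i q / X p q else 0
  have hv : ∀ i, p ≤ i → v i = 0 := fun i h => if_neg (not_lt.2 h)
  have hmul : ∀ i j, ((1 + vecMulVec v (Pi.single p 1)) * X) i j = X i j + v i * X p j := by
    intro i j
    simp [add_mul, vecMulVec_mul, vecMulVec_apply]
  refine ⟨1 + vecMulVec v (Pi.single p 1), IsUT.one_add fun i j hji => ?_,
    fun i j h => ?_, fun i hi => ?_⟩
  · rw [vecMulVec_apply]
    rcases eq_or_ne j p with rfl | hj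
    · rw [hv i hji, zero_mul]
    · rw [Pi.single_eq_of_ne hj, mul_zero]
  · rcases h with h | h <;> simp [hmul, h, hv]
  · rw [hmul, show v i = -X i q / X p q from if_pos hi]
    field_simp
    ring

theorem exists_isUT_clearing_row_right {X : Matrix (Fin n) (Fin n) K} {p q : Fin n}
    (hpq : X p q ≠ 0) :
    ∃ w : Matrix (Fin n) (Fin n) K, IsUT w ∧ (∀ i j, (j ≤ q ∨ X i q = 0) → (X * w) i j = X i j) ∧
      ∀ j, q < j → (X * w) p j = 0 := by
  classical
  let f : Fin n → K := fun j => if q < j then -X p j / X p q else 0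
  have hf : ∀ j, j ≤ q → f j = 0 := fun j h => if_neg (not_lt.2 h)
  have hmul : ∀ i j, (X * (1 + vecMulVec (Pi.single q 1) f)) i j = X i j + X i q * f j := by
    intro i j
    simp [mul_add, mul_vecMulVec, vecMulVec_apply]
  refine ⟨1 + vecMulVec (Pi.single q 1) f, IsUT.one_add fun i j hji => ?_,
    fun i j h => ?_, fun j hj => ?_⟩
  · rw [vecMulVec_apply]
    rcases eq_or_ne i q with rfl | hi
    · rw [hf j hji, mul_zero]
    · rw [Pi.single_eq_of_ne hi, zero_mul]
  · rcases h with h | h <;> simp [hmul, h, hf]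
  · rw [hmul, show f j = -X p j / X p q from if_pos hj]
    field_simp
    ring

theorem exists_isUT_clearing_pivot_cross {X : Matrix (Fin n) (Fin n) K} {p q : Fin n}
    (hpq : X p q ≠ 0) (hcol : ∀ i, p < i → X i q = 0) (hrow : ∀ j, j < q → X p j = 0) :
    ∃ u w : Matrix (Fin n) (Fin n) K, IsUT u ∧ IsUT w ∧
      (∀ i j, (p < i ∨ j < q) → (u * X * w) i j = X i j) ∧
      (∀ i, i ≠ p → (u * X * w) i q = 0) ∧ (∀ j, j ≠ q → (u * X * w) p j = 0) := by
  obtain ⟨u, hu, hleft, habove⟩ := exists_isUT_clearing_col_above hpq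
  have hpq' : (u * X) p q ≠ 0 := by rwa [hleft p q (Or.inl le_rfl)]
  obtain ⟨w, hw, hright, hbeside⟩ := exists_isUT_clearing_row_right hpq'
  have hcol' : ∀ i, i ≠ p → (u * X) i q = 0 := by
    intro i hi
    rcases lt_or_gt_of_ne hi with hi | hi
    · exact habove i hi
    · rw [hleft i q (Or.inl hi.le), hcol i hi]
  refine ⟨u, w, hu, hw, fun i j hij => ?_, fun i hi => ?_, fun j hj => ?_⟩
  · rcases hij with hi | hj
    · rw [hright i j (Or.inr (hcol' i hi.ne')), hleft i j (Or.inl hi.le)]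
    · rw [hright i j (Or.inl hj.le), hleft i j (Or.inr (hrow j hj))]
  · rw [hright i q (Or.inl le_rfl), hcol' i hi]
  · rcases lt_or_gt_of_ne hj with hj | hj
    · rw [hright p j (Or.inl hj.le), hleft p j (Or.inl le_rfl), hrow j hj]
    · exact hbeside j hj

end Elimination

section Hook

variable {n : ℕ}

def AntiDiagOnHook {R : Type*} [Zero R] (e : ℕ) (X : Matrix (Fin n) (Fin n) R) : Prop :=
  ∀ i j : Fin n, (n ≤ i + e ∨ j < e) → (i : ℕ) + j ≠ n - 1 → X i j = 0

theorem antiDiagOnHook_zero {R : Type*} [Zero R] (X : Matrix (Fin n) (Fin n) R) :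
    AntiDiagOnHook 0 X :=
  fun i j h => by omega

theorem AntiDiagOnHook.antiDiag {R : Type*} [Zero R] {X : Matrix (Fin n) (Fin n) R}
    (hX : AntiDiagOnHook n X) : AntiDiag X :=
  fun i j => hX i j (Or.inr j.is_lt)

theorem AntiDiagOnHook.pivot_ne_zero {R : Type*} [CommRing R] {e : ℕ}
    {X : Matrix (Fin n) (Fin n) R} (hX : AntiDiagOnHook e X) (he : e < n)
    (hD : Dmin (n - e) X ≠ 0) : X ⟨n - 1 - e, by omega⟩ ⟨e, he⟩ ≠ 0 := by
  intro hpiv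
  apply hD
  rw [Dmin_eq_det_submatrix (by omega)]
  refine det_eq_zero_of_row_eq_zero ⟨0, by omega⟩ fun c => ?_
  rcases lt_or_eq_of_le (show (c : ℕ) ≤ e by omega) with hc | hc
  · exact hX _ _ (Or.inr hc) (by simp; omega)
  · rw [← hpiv, submatrix_apply]
    congr 1 <;> ext <;> simp <;> omega

theorem AntiDiagOnHook.exists_succ {K : Type*} [Field K] {e : ℕ}
    {X : Matrix (Fin n) (Fin n) K} (hX : AntiDiagOnHook e X) (he : e < n)
    (hpiv : X ⟨n - 1 - e, by omega⟩ ⟨e, he⟩ ≠ 0) :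
    ∃ u w : Matrix (Fin n) (Fin n) K, IsUT u ∧ IsUT w ∧ AntiDiagOnHook (e + 1) (u * X * w) := by
  obtain ⟨u, w, hu, hw, hsame, hcol, hrow⟩ := exists_isUT_clearing_pivot_cross hpiv
    (fun i hi => hX _ _ (Or.inl (by simp [Fin.lt_def] at hi; omega))
      (by simp [Fin.lt_def] at hi ⊢; omega))
    (fun j hj => hX _ _ (Or.inr hj) (by simp [Fin.lt_def] at hj ⊢; omega))
  refine ⟨u, w, hu, hw, fun i j hij hne => ?_⟩
  by_cases hold : n ≤ i + e ∨ j < e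
  · rw [hsame i j (by simp [Fin.lt_def]; omega)]
    exact hX i j hold hne
  · rcases (show (i : ℕ) = n - 1 - e ∨ (j : ℕ) = e by omega) with hi | hj
    · rw [show i = ⟨n - 1 - e, by omega⟩ from Fin.ext hi]
      exact hrow j (by simp [Fin.ext_iff]; omega)
    · rw [show j = ⟨e, he⟩ from Fin.ext hj]
      exact hcol i (by simp [Fin.ext_iff]; omega)

end Hook

section AntiDiagonalForm

variable {n : ℕ}

theorem exists_isUT_antiDiagOnHook {K : Type*} [Field K] {X : Matrix (Fin n) (Fin n) K}
    (hreg : ∀ k, 1 ≤ k → k ≤ n → Dmin k X ≠ 0) :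
    ∀ e ≤ n, ∃ u w : Matrix (Fin n) (Fin n) K, IsUT u ∧ IsUT w ∧ AntiDiagOnHook e (u * X * w)
  | 0, _ => ⟨1, 1, IsUT.one, IsUT.one, antiDiagOnHook_zero _⟩
  | e + 1, he => by
    obtain ⟨u, w, hu, hw, hX⟩ := exists_isUT_antiDiagOnHook hreg e (by omega)
    have hD : Dmin (n - e) (u * X * w) ≠ 0 := by
      rw [Dmin_mul_mul_of_isUT hu hw (by omega)]
      exact hreg _ (by omega) (by omega)
    obtain ⟨u', w', hu', hw', hX'⟩ := hX.exists_succ (by omega) (hX.pivot_ne_zero (by omega) hD)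
    refine ⟨u' * u, w * w', hu'.mul hu, hw.mul hw', ?_⟩
    simpa only [Matrix.mul_assoc] using hX'

theorem exists_isUT_mul_mul_antiDiag {K : Type*} [Field K] {X : Matrix (Fin n) (Fin n) K}
    (hreg : ∀ k, 1 ≤ k → k ≤ n → Dmin k X ≠ 0) :
    ∃ u w : Matrix (Fin n) (Fin n) K, IsUT u ∧ IsUT w ∧ AntiDiag (u * X * w) :=
  let ⟨u, w, hu, hw, hX⟩ := exists_isUT_antiDiagOnHook hreg n le_rfl
  ⟨u, w, hu, hw, hX.antiDiag⟩

variable {R : Type*} [CommRing R] {u w g X : Matrix (Fin n) (Fin n) R}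

theorem AntiDiag.lowerAnti_mul_mul_inv (hΛ : AntiDiag (u * X * w)) (hw : IsUT w) (hg : IsUT g) :
    LowerAnti (u * X * g⁻¹) := by
  rw [← mul_nonsing_inv_cancel_left w g⁻¹ hw.isUnit_det, ← Matrix.mul_assoc]
  exact hΛ.lowerAnti_mul_right (hw.inv.mul hg.inv).isUpperTriangular

theorem AntiDiag.upperAnti_mul_mul_inv_inv (hΛ : AntiDiag (u * X * w)) (hu : IsUT u)
    (hw : IsUT w) (hg : IsUT g) : UpperAnti (g * X * w⁻¹⁻¹) := by
  rw [hw.inv_inv, ← nonsing_inv_mul_cancel_left u X hu.isUnit_det, ← Matrix.mul_assoc g,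
    Matrix.mul_assoc _ (u * X)]
  exact hΛ.upperAnti_mul_left (hg.mul hu.inv).isUpperTriangular

end AntiDiagonalForm

theorem exists_unitriangular_moving_into_section_general {K : Type*} [Field K] {n : ℕ}
    {V A : Type*} (s t : A → V) (ψ : V → A)
    (h : A → Matrix (Fin n) (Fin n) K)
    (hreg : ∀ (α : A) (k : ℕ), 1 ≤ k → k ≤ n → Dmin k (h α) ≠ 0) :
    ∃ g : V → Matrix (Fin n) (Fin n) K, (∀ v, IsUT (g v)) ∧
      ∀ α : A, SMem s t ψ α (g (t α) * h α * (g (s α))⁻¹) := by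
  classical
  choose u w hu hw hΛ using fun α => exists_isUT_mul_mul_antiDiag (hreg α)
  let g : V → Matrix (Fin n) (Fin n) K := fun v =>
    if t (ψ v) = v then u (ψ v) else (w (ψ v))⁻¹
  have hg : ∀ v, IsUT (g v) := fun v => by
    dsimp only [g]
    split_ifs
    exacts [hu _, (hw _).inv]
  have hg_t : ∀ α, α = ψ (t α) → g (t α) = u α := fun α hα => by
    simp only [g, ← hα, if_true]
  have hg_s : ∀ α, α = ψ (s α) → s α ≠ t α → g (s α) = (w α)⁻¹ := fun α hα hne => by
    simp only [g, ← hα, if_neg hne.symm]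
  have hlower : ∀ α, α = ψ (t α) → LowerAnti (g (t α) * h α * (g (s α))⁻¹) := fun α hα => by
    rw [hg_t α hα]
    exact (hΛ α).lowerAnti_mul_mul_inv (hw α) (hg _)
  refine ⟨g, hg, fun α => ⟨fun hloop hα => hlower α (by rwa [← hloop]),
    fun hne => ⟨fun hα => hlower α hα.1, fun hα => ?_, fun hα => ?_⟩⟩⟩
  · rw [hg_s α hα.1 hne]
    exact (hΛ α).upperAnti_mul_mul_inv_inv (hu α) (hw α) (hg _)
  · rw [hg_t α hα.2, hg_s α hα.1 hne, (hw α).inv_inv]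
    exact hΛ α

/-- if all corner minors `D_k(X_α)` of all components of a point
`h = (X_α)_{α∈A}` of `H = Π_α Mat(n,K)` are nonzero, then there is
`g = (g_v) ∈ U_Q = Π_v UT(n)` with `g_{t(α)} X_α g_{s(α)}⁻¹ ∈ S_α` for every arrow `α`,
i.e. `g.h` lies in the section `S = Π_α S_α`. -/
theorem exists_unitriangular_moving_into_section {K : Type*} [Field K] {n : ℕ} (hn : 1 ≤ n)
    {V A : Type*} [Fintype V] [Fintype A] (s t : A → V) (ψ : V → A)
    (hψ : ∀ v : V, s (ψ v) = v ∨ t (ψ v) = v)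
    (h : A → Matrix (Fin n) (Fin n) K)
    (hreg : ∀ (α : A) (k : ℕ), 1 ≤ k → k ≤ n → Dmin k (h α) ≠ 0) :
    ∃ g : V → Matrix (Fin n) (Fin n) K, (∀ v, IsUT (g v)) ∧
      ∀ α : A, SMem s t ψ α (g (t α) * h α * (g (s α))⁻¹) :=
  exists_unitriangular_moving_into_section_general s t ψ h hreg
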